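/- Let G be a connected signed colored graph of degree 5 satisfying axioms 1, 2, 3, and 5 with LSP_5 and LSF_4. If G contains a vertex u admitting a 2-edge but neither a 3-edge nor a 4-edge, then the quasisymmetric generating function of G equals s_{(4,1)} or s_{(2,1,1,1)}; in particular G has exactly 4 vertices. -/

import Mathlib

open Finset

/-- A signed, colored graph of type `(n, N)`: a finite vertex set `V`,
a signature function `sgn v i ∈ {±1}` (encoded as `Bool`, `true` = `+1`)
for `1 ≤ i ≤ N-1`, and edge relations `E i` for each color `1 < i < n`. -/
structure SCG (n N : ℕ) where
  V : Type
  fintypeV : Fintype V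
  sgn : V → ℕ → Bool
  E : ℕ → V → V → Prop

namespace SCG

variable {n N : ℕ}

/-- Edges are unordered pairs of distinct vertices with colors `1 < i < n`. -/
def Proper (G : SCG n N) : Prop :=
  ∀ i v w, G.E i v w → G.E i w v ∧ v ≠ w ∧ 1 < i ∧ i < n

def hasNbr (G : SCG n N) (i : ℕ) (v : G.V) : Prop := ∃ w, G.E i v w

/-- The `i`-neighbor `E_i(v)` of `v` (defaulting to `v` when there is none). -/
noncomputable def nbr (G : SCG n N) (i : ℕ) (v : G.V) : G.V := by
  classical
  exact if h : G.hasNbr i v then h.choose else v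

/-- Dual equivalence axiom 1. -/
def Ax1 (G : SCG n N) : Prop :=
  ∀ i, 1 < i → i < n → ∀ w : G.V,
    ((G.sgn w (i - 1) ≠ G.sgn w i) ↔ ∃! x, G.E i w x)

/-- Dual equivalence axiom 2. -/
def Ax2 (G : SCG n N) : Prop :=
  ∀ i, ∀ w x : G.V, G.E i w x →
    (G.sgn x (i - 1) = !G.sgn w (i - 1)) ∧ (G.sgn x i = !G.sgn w i) ∧
      ∀ h, h + 2 < i ∨ i + 1 < h → G.sgn x h = G.sgn w h

/-- Dual equivalence axiom 3. -/
def Ax3 (G : SCG n N) : Prop :=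
  ∀ i, ∀ w x : G.V, G.E i w x →
    ((G.sgn w (i - 2) ≠ G.sgn x (i - 2)) → G.sgn w (i - 2) ≠ G.sgn w (i - 1)) ∧
    ((G.sgn w (i + 1) ≠ G.sgn x (i + 1)) → G.sgn w (i + 1) ≠ G.sgn w i)

/-- Dual equivalence axiom 5. -/
def Ax5 (G : SCG n N) : Prop :=
  ∀ i j, ∀ w x y : G.V, (i + 3 ≤ j ∨ j + 3 ≤ i) →
    G.E i w x → G.E j x y → ∃ v, G.E j w v ∧ G.E i v y

/-- The connected component of `v` in the graph whose edges have colors in `S`. -/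
def Comp (G : SCG n N) (S : Set ℕ) (v : G.V) : Set G.V :=
  {w | Relation.ReflTransGen (fun a b => ∃ i ∈ S, G.E i a b) v w}

def Connected (G : SCG n N) : Prop := ∀ v w : G.V, w ∈ G.Comp Set.univ v

/-- Allowed 2-color components (Figure `λ4`): a single vertex, a path with one
`(i-1)`-edge and one `i`-edge, or a double edge. -/
def Allowed2 (G : SCG n N) (i : ℕ) : Prop :=
  ∀ v : G.V,
    (G.Comp {i - 1, i} v = {v}) ∨
    (∃ a b c : G.V, G.E (i - 1) a b ∧ G.E i b c ∧
        G.Comp {i - 1, i} v = {a, b, c} ∧ ¬G.hasNbr i a ∧ ¬G.hasNbr (i - 1) c) ∨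
    (∃ a b : G.V, G.E (i - 1) a b ∧ G.E i a b ∧ G.Comp {i - 1, i} v = {a, b})

/-- The component of `E_{i-2} ∪ E_{i-1} ∪ E_i` containing `v` is one of the
allowed 3-color components (Figure `λ5`). -/
def Allowed3At (G : SCG n N) (i : ℕ) (v : G.V) : Prop :=
  (G.Comp (Set.Icc (i - 2) i) v = {v}) ∨
  (∃ a b c d : G.V, G.E (i - 2) a b ∧ G.E (i - 1) b c ∧ G.E i c d ∧
      G.Comp (Set.Icc (i - 2) i) v = {a, b, c, d} ∧
      ¬G.hasNbr (i - 1) a ∧ ¬G.hasNbr i a ∧ ¬G.hasNbr i b ∧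
      ¬G.hasNbr (i - 2) c ∧ ¬G.hasNbr (i - 2) d ∧ ¬G.hasNbr (i - 1) d) ∨
  (∃ a b c d e : G.V, G.E (i - 2) a b ∧ G.E (i - 1) a b ∧ G.E i b c ∧
      G.E (i - 2) c d ∧ G.E (i - 1) d e ∧ G.E i d e ∧
      G.Comp (Set.Icc (i - 2) i) v = {a, b, c, d, e} ∧
      ¬G.hasNbr i a ∧ ¬G.hasNbr (i - 1) c ∧ ¬G.hasNbr (i - 2) e) ∨
  (∃ u p w x y z : G.V, G.E (i - 1) u p ∧ G.E (i - 2) p w ∧ G.E i p x ∧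
      G.E i w y ∧ G.E (i - 2) x y ∧ G.E (i - 1) y z ∧
      G.Comp (Set.Icc (i - 2) i) v = {u, p, w, x, y, z} ∧
      ¬G.hasNbr (i - 2) u ∧ ¬G.hasNbr i u ∧ ¬G.hasNbr (i - 1) w ∧
      ¬G.hasNbr (i - 1) x ∧ ¬G.hasNbr (i - 2) z ∧ ¬G.hasNbr i z)

def Allowed3 (G : SCG n N) (i : ℕ) : Prop := ∀ v : G.V, G.Allowed3At i v

/-- Dual equivalence axiom 4. -/
def Ax4 (G : SCG n N) : Prop :=
  (∀ i, 2 < i → i < n → G.Allowed2 i) ∧ (∀ i, 3 < i → i < n → G.Allowed3 i)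

/-- Dual equivalence axiom 6. -/
def Ax6 (G : SCG n N) : Prop :=
  ∀ i, 1 < i → i < n → ∀ v w : G.V, w ∈ G.Comp (Set.Icc 2 i) v →
    (Relation.ReflTransGen (fun a b => ∃ j, 2 ≤ j ∧ j < i ∧ G.E j a b) v w ∨
      ∃ a b, Relation.ReflTransGen (fun a b => ∃ j, 2 ≤ j ∧ j < i ∧ G.E j a b) v a ∧
        G.E i a b ∧
        Relation.ReflTransGen (fun a b => ∃ j, 2 ≤ j ∧ j < i ∧ G.E j a b) b w)

/-- A dual equivalence graph of type `(n, N)`. -/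
def IsDEG (G : SCG n N) : Prop :=
  n ≤ N ∧ G.Proper ∧ G.Ax1 ∧ G.Ax2 ∧ G.Ax3 ∧ G.Ax4 ∧ G.Ax5 ∧ G.Ax6

/-- The `(m, N)`-restriction: keep all signatures, only edges of color `< m`. -/
def restrict (G : SCG n N) (m : ℕ) : SCG m N :=
  ⟨G.V, G.fintypeV, G.sgn, fun j a b => j < m ∧ G.E j a b⟩

end SCG

/-- Standard Young tableaux of shape `μ`, with entries `0, …, μ.card - 1`,
strictly increasing along rows and columns. -/
def SYT (μ : YoungDiagram) : Type :=
  {e : {c // c ∈ μ.cells} ≃ Fin μ.card //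
    ∀ c c' : {c // c ∈ μ.cells}, c.1.1 ≤ c'.1.1 → c.1.2 ≤ c'.1.2 → c ≠ c' →
      e c < e c'}

/-- The descent signature of a standard Young tableau: `sytSgn T j = true` (i.e. `+1`)
exactly when the entry `j` appears weakly above the entry `j+1`. -/
def sytSgn {μ : YoungDiagram} (T : SYT μ) (j : ℕ) : Bool :=
  if h : j + 1 < μ.card then
    decide ((T.1.symm ⟨j + 1, h⟩).1.1 ≤ (T.1.symm ⟨j, Nat.lt_of_succ_lt h⟩).1.1)
  else true

/-- The multiplicity of the fundamental quasisymmetric function indexed by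
`s : Fin (m-1) → Bool` (entry `j` recording the signature position `j+1`) in the
Schur function `s_μ`, via Gessel's expansion over standard Young tableaux. -/
noncomputable def schurFun (m : ℕ) (μ : YoungDiagram) : (Fin (m - 1) → Bool) → ℕ :=
  fun s => Nat.card {T : SYT μ // ∀ j : Fin (m - 1), sytSgn T j.1 = s j}

namespace SCG

variable {n N : ℕ}

/-- The quasisymmetric generating function of the graph, recorded as the
multiplicity of each fundamental quasisymmetric function `Q_s`. -/
noncomputable def fullGF (G : SCG n N) : (Fin (N - 1) → Bool) → ℕ :=
  fun s => Nat.card {v : G.V // ∀ j : Fin (N - 1), G.sgn v (j.1 + 1) = s j}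

/-- The degree-`m` restricted generating function of a set of vertices, using the
signature window `lo, lo+1, …, lo+m-2`. -/
noncomputable def restGF (G : SCG n N) (S : Set G.V) (lo m : ℕ) :
    (Fin (m - 1) → Bool) → ℕ :=
  fun s => Nat.card {v : G.V // v ∈ S ∧ ∀ j : Fin (m - 1), G.sgn v (lo + j.1) = s j}

/-- `G` is Schur multiplicity-free for degree `m`. -/
def LSF (G : SCG n N) (m : ℕ) : Prop :=
  ∀ i, m - 2 < i → i < n → ∀ v : G.V,
    ∃ μ : YoungDiagram, μ.card = m ∧
      G.restGF (G.Comp (Set.Icc (i - (m - 3)) i) v) (i - (m - 2)) m = schurFun m μ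

/-- `G` is Schur positive for degree `m`. -/
def LSP (G : SCG n N) (m : ℕ) : Prop :=
  ∀ i, m - 2 < i → i < n → ∀ v : G.V,
    ∃ c : Multiset YoungDiagram, (∀ μ ∈ c, μ.card = m) ∧
      G.restGF (G.Comp (Set.Icc (i - (m - 3)) i) v) (i - (m - 2)) m
        = fun s => (c.map (fun μ => schurFun m μ s)).sum

/-- A locally Schur positive graph. -/
def LSPG (G : SCG n N) : Prop :=
  G.Proper ∧ G.Ax1 ∧ G.Ax2 ∧ G.Ax3 ∧ G.Ax5 ∧ G.LSP 4 ∧ G.LSP 5 ∧ G.LSP 6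

/-- `w` has a flat `i`-edge. -/
def FlatEdge (G : SCG n N) (i : ℕ) (w : G.V) : Prop :=
  G.hasNbr i w ∧ G.sgn w (i - 2) = G.sgn (G.nbr i w) (i - 2)

/-- `w` has `i`-type W. -/
def TypeW (G : SCG n N) (i : ℕ) (w : G.V) : Prop :=
  G.hasNbr (i - 1) w ∧ G.sgn w i = !G.sgn (G.nbr (i - 1) w) i

/-- `w` has `i`-type C. -/
def TypeC (G : SCG n N) (i : ℕ) (w : G.V) : Prop :=
  G.hasNbr i w ∧ (G.hasNbr (i - 1) w → G.sgn w i = G.sgn (G.nbr (i - 1) w) i) ∧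
  G.hasNbr (i - 2) w ∧
  ((G.hasNbr (i - 1) w ∧ G.sgn w (i - 1) = G.sgn (G.nbr (i - 2) w) (i - 1)) ∨
   (¬G.hasNbr (i - 1) w ∧ G.sgn w i = G.sgn (G.nbr (i - 1) (G.nbr (i - 2) w)) i))

/-- A non-flat `i`-chain `(w 0, w 1, …, w (2h-1))`. -/
def IsNonflatChain (G : SCG n N) (i h : ℕ) (w : ℕ → G.V) : Prop :=
  (∀ j < 2 * h, ∀ k < 2 * h, j ≠ k → w j ≠ w k) ∧
  (∀ j, 2 * j + 1 < 2 * h → G.E i (w (2 * j)) (w (2 * j + 1))) ∧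
  (∀ j, 2 * j + 2 < 2 * h → G.E (i - 1) (w (2 * j + 1)) (w (2 * j + 2)))

/-- The set `W_i(G)`: vertices of `i`-type W admitting an `i`-neighbor with
`E_{i-1}(w) ≠ E_i(w)`. -/
def Wset (G : SCG n N) (i : ℕ) : Set G.V :=
  {v | G.hasNbr i v ∧ G.TypeW i v ∧ G.nbr (i - 1) v ≠ G.nbr i v}

/-- The set `W_i(G)`, described via non-flat `i`-chains. -/
def WsetChain (G : SCG n N) (i : ℕ) : Set G.V :=
  {v | ∃ h w j, G.IsNonflatChain i h w ∧ 0 < j ∧ j + 2 ≤ 2 * h ∧ v = w j}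

/-- One step `E_{i-1} E_{i-2}`. -/
noncomputable def stepWD (G : SCG n N) (i : ℕ) (v : G.V) : G.V :=
  G.nbr (i - 1) (G.nbr (i - 2) v)

/-- A flat `i`-chain `(x 0, x 1, …, x (2h-1))`. -/
def IsFlatChain (G : SCG n N) (i h : ℕ) (x : ℕ → G.V) : Prop :=
  (∀ j < 2 * h, ∀ k < 2 * h, j ≠ k → x j ≠ x k) ∧
  (∀ j < 2 * h, G.hasNbr (i - 2) (x j)) ∧
  (∀ j, 2 * j + 1 < 2 * h → G.E i (x (2 * j)) (x (2 * j + 1))) ∧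
  (∀ j, 2 * j + 2 < 2 * h → ∃ m : ℕ,
      ¬G.TypeW (i - 1) ((G.stepWD i)^[m] (x (2 * j + 1))) ∧
      x (2 * j + 2) = G.nbr (i - 2) ((G.stepWD i)^[m] (x (2 * j + 1))))

/-- The set `C_i(G)`: vertices strictly inside a flat `i`-chain of length `> 4`. -/
def Cset (G : SCG n N) (i : ℕ) : Set G.V :=
  {v | ∃ h x j, G.IsFlatChain i h x ∧ 2 ≤ j ∧ j + 3 ≤ 2 * h ∧ v = x j}

/-- The `i`-package of `v`: the component using colors `≤ i-3` and `≥ i+3`. -/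
def pkg (G : SCG n N) (i : ℕ) (v : G.V) : Set G.V :=
  G.Comp {h | h + 3 ≤ i ∨ i + 3 ≤ h} v

/-- The set `W_i^0(G)`. -/
def W0set (G : SCG n N) (i : ℕ) : Set G.V :=
  {w | w ∈ G.Wset i ∧ ∀ v ∈ G.pkg (i - 1) w, G.FlatEdge (i - 1) v}

/-- The set `C_i^0(G)`: members of `C_i(G)` such that all vertices between `x` and
`(E_{i-1}E_{i-2})^m E_i(x)` have flat `(i-2)`-edges, where `m ≥ 0` is minimal with
`(E_{i-1}E_{i-2})^m E_i(x)` not of `(i-1)`-type W. -/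
def C0set (G : SCG n N) (i : ℕ) : Set G.V :=
  {x | x ∈ G.Cset i ∧ ∀ m : ℕ,
      ((∀ t < m, G.TypeW (i - 1) ((G.stepWD i)^[t] (G.nbr i x))) ∧
          ¬G.TypeW (i - 1) ((G.stepWD i)^[m] (G.nbr i x))) →
        G.FlatEdge (i - 2) x ∧
        (∀ t ≤ m, G.FlatEdge (i - 2) ((G.stepWD i)^[t] (G.nbr i x))) ∧
        (∀ t < m, G.FlatEdge (i - 2) (G.nbr (i - 2) ((G.stepWD i)^[t] (G.nbr i x))))}

/-- An isomorphism between the `i`-packages `A` and `B`: a signature- and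
edge-preserving involution interchanging them. -/
def PkgIso (G : SCG n N) (i : ℕ) (A B : Set G.V) (φ : G.V → G.V) : Prop :=
  (∀ v ∈ A, φ v ∈ B) ∧ (∀ v ∈ B, φ v ∈ A) ∧ (∀ v ∈ A ∪ B, φ (φ v) = v) ∧
  (∀ v ∈ A ∪ B, ∀ h, h + 3 ≤ i ∨ i + 2 ≤ h → G.sgn (φ v) h = G.sgn v h) ∧
  (∀ a b : G.V, a ∈ A ∪ B → ∀ h, h + 3 ≤ i ∨ i + 3 ≤ h → G.E h a b →
      G.E h (φ a) (φ b))

/-- The new `i`-neighbor of `v` after swapping the `i`-edges on the packages `S`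
using the package isomorphism `φ`. -/
noncomputable def swapMap (G : SCG n N) (i : ℕ) (S : Set G.V) (φ : G.V → G.V)
    (v : G.V) : G.V := by
  classical
  exact if v ∈ S then φ v
    else if G.nbr i v ∈ S then G.nbr i (φ (G.nbr i v))
    else G.nbr i v

/-- The transformed graph: replace the `i`-edges by the pairs `{v, swapMap v}`,
keeping all other data. -/
noncomputable def transform (G : SCG n N) (i : ℕ) (S : Set G.V) (φ : G.V → G.V) :
    SCG n N :=
  ⟨G.V, G.fintypeV, G.sgn, fun j a b =>
    if j = i then
      (G.hasNbr i a ∧ b = G.swapMap i S φ a) ∨ (G.hasNbr i b ∧ a = G.swapMap i S φ b)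
    else G.E j a b⟩

/-- All components of `E_{i-2} ∪ E_{i-1} ∪ E_i` have Schur positive restricted
degree-5 generating functions. -/
def LSP5at (G : SCG n N) (i : ℕ) : Prop :=
  ∀ v : G.V, ∃ c : Multiset YoungDiagram, (∀ μ ∈ c, μ.card = 5) ∧
    G.restGF (G.Comp (Set.Icc (i - 2) i) v) (i - 3) 5
      = fun s => (c.map (fun μ => schurFun 5 μ s)).sum

/-- The set `U_i(G)`: vertices of `W_i^0(G)` (resp. `C_i^0(G)`) whose transformation
`φ_i` (resp. `ψ_i`) keeps all components of `E_{i-2} ∪ E_{i-1} ∪ E_i` Schur positive. -/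
def Uset (G : SCG n N) (i : ℕ) : Set G.V :=
  {v | (v ∈ G.W0set i ∧ ∃ φ : G.V → G.V,
          G.PkgIso i (G.pkg i v) (G.pkg i (G.nbr (i - 1) v)) φ ∧
          SCG.LSP5at (G.transform i (G.pkg i v ∪ G.pkg i (G.nbr (i - 1) v)) φ) i) ∨
       (v ∈ G.C0set i ∧ ∃ m : ℕ,
          (∀ t < m, G.TypeW (i - 1) ((G.stepWD i)^[t] (G.nbr i v))) ∧
          ¬G.TypeW (i - 1) ((G.stepWD i)^[m] (G.nbr i v)) ∧
          ∃ φ : G.V → G.V,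
            G.PkgIso i (G.pkg i (G.nbr (i - 2) v))
              (G.pkg i (G.nbr (i - 2) ((G.stepWD i)^[m] (G.nbr i v)))) φ ∧
            SCG.LSP5at (G.transform i (G.pkg i (G.nbr (i - 2) v) ∪
                G.pkg i (G.nbr (i - 2) ((G.stepWD i)^[m] (G.nbr i v)))) φ) i)}

end SCG

/-!
Write `b = σ(u)₂`. Axiom 1 gives `σ(u)₂ = σ(u)₃ = σ(u)₄`, and `σ(u)₁ = -b`: otherwise the
`{2,3}`-component of `u` would see a constant window, i.e. be `s_4` or `s_{1111}`, which have no
edges. So the `{2,3}`-component of `u` contains the windows `(-b, b, b)` and `(b, -b, b)`, hence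
is `s_{31}` or `s_{211}`, and every window in it differs from `(b, b, b)` in at most one entry;
the same then holds for the `{3,4}`-component one step further. This pins down a path
`u —2— w —3— x —4— y` whose signatures are `b` except at positions `1, 2, 3, 4` respectively,
and rules out every other edge at these vertices. By connectivity they are all of `G`, and their
signatures are exactly the descent signatures of `s_{41}` (`b = +`) or `s_{2111}` (`b = -`).
-/

namespace YoungDiagram

theorem fst_lt_card {μ : YoungDiagram} {c : ℕ × ℕ} (hc : c ∈ μ) : c.1 < μ.card := by
  have hcol : (Finset.range (c.1 + 1)).map ⟨(·, 0), fun a b h => by simpa using h⟩ ⊆ μ.cells :=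
    fun p hp => by
      obtain ⟨a, ha, rfl⟩ := Finset.mem_map.mp hp
      exact μ.up_left_mem (Nat.lt_succ_iff.mp (Finset.mem_range.mp ha)) (Nat.zero_le _) hc
  simpa using Finset.card_le_card hcol

theorem rowLen_eq_zero_of_card_le {μ : YoungDiagram} {i : ℕ} (hi : μ.card ≤ i) :
    μ.rowLen i = 0 := by
  by_contra h
  have := fst_lt_card (mem_iff_lt_rowLen.mpr (Nat.pos_of_ne_zero h))
  omega

theorem card_eq_sum_rowLen (μ : YoungDiagram) :
    μ.card = ∑ i ∈ Finset.range μ.card, μ.rowLen i :=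
  calc μ.card = ∑ i ∈ Finset.range μ.card, (μ.cells.filter (·.1 = i)).card :=
        Finset.card_eq_sum_card_fiberwise fun c hc =>
          Finset.mem_range.mpr (fst_lt_card ((mem_cells c).mp hc))
    _ = _ := Finset.sum_congr rfl fun _ _ => μ.rowLen_eq_card.symm

theorem eq_ofRowLens_of_rowLen_eq {μ : YoungDiagram} {w : List ℕ} (hw : w.SortedGE)
    (h : ∀ i, μ.rowLen i = w.getD i 0) : μ = ofRowLens w hw := by
  ext ⟨i, j⟩
  rw [mem_cells, mem_cells, mem_ofRowLens, mem_iff_lt_rowLen, h]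
  by_cases hi : i < w.length <;> simp [hi]

theorem card_eq_four_cases {μ : YoungDiagram} (h4 : μ.card = 4) :
    μ = ofRowLens [4] (by decide) ∨ μ = ofRowLens [3, 1] (by decide) ∨
    μ = ofRowLens [2, 2] (by decide) ∨ μ = ofRowLens [2, 1, 1] (by decide) ∨
    μ = ofRowLens [1, 1, 1, 1] (by decide) := by
  have hsum := μ.card_eq_sum_rowLen
  simp only [h4, Finset.sum_range_succ, Finset.sum_range_zero] at hsum
  have h01 := μ.rowLen_anti 0 1 (by omega)
  have h12 := μ.rowLen_anti 1 2 (by omega)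
  have h23 := μ.rowLen_anti 2 3 (by omega)
  have hrow : ∀ i, μ.rowLen (i + 4) = 0 := fun i => rowLen_eq_zero_of_card_le (by omega)
  have of_rowLen : ∀ w : List ℕ, ∀ hw : w.SortedGE, w.length ≤ 4 →
      (∀ i < 4, μ.rowLen i = w.getD i 0) → μ = ofRowLens w hw := by
    intro w hw hlen hlt
    refine eq_ofRowLens_of_rowLen_eq hw fun i => ?_
    rcases lt_or_ge i 4 with hi | hi
    · exact hlt i hi
    · obtain ⟨k, rfl⟩ := Nat.exists_eq_add_of_le' hi
      rw [hrow, List.getD_eq_default _ _ (by omega)]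
  have hcases : μ.rowLen 0 = 4 ∧ μ.rowLen 1 = 0 ∧ μ.rowLen 2 = 0 ∧ μ.rowLen 3 = 0 ∨
      μ.rowLen 0 = 3 ∧ μ.rowLen 1 = 1 ∧ μ.rowLen 2 = 0 ∧ μ.rowLen 3 = 0 ∨
      μ.rowLen 0 = 2 ∧ μ.rowLen 1 = 2 ∧ μ.rowLen 2 = 0 ∧ μ.rowLen 3 = 0 ∨
      μ.rowLen 0 = 2 ∧ μ.rowLen 1 = 1 ∧ μ.rowLen 2 = 1 ∧ μ.rowLen 3 = 0 ∨
      μ.rowLen 0 = 1 ∧ μ.rowLen 1 = 1 ∧ μ.rowLen 2 = 1 ∧ μ.rowLen 3 = 1 := by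
    omega
  rcases hcases with ⟨r0, r1, r2, r3⟩ | ⟨r0, r1, r2, r3⟩ | ⟨r0, r1, r2, r3⟩ | ⟨r0, r1, r2, r3⟩ |
      ⟨r0, r1, r2, r3⟩ <;>
  [left; (right; left); (right; right; left); (right; right; right; left);
    (right; right; right; right)] <;>
  exact of_rowLen _ _ (by simp) fun i hi => by interval_cases i <;> simp [r0, r1, r2, r3]

end YoungDiagram

instance (μ : YoungDiagram) : Fintype (SYT μ) := by unfold SYT; infer_instance

theorem schurFun_four_const_support {μ : YoungDiagram} (h4 : μ.card = 4) {b : Bool}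
    {s : Fin 3 → Bool} (hb : 0 < schurFun 4 μ ![b, b, b]) (hs : 0 < schurFun 4 μ s) :
    s = ![b, b, b] := by
  rcases YoungDiagram.card_eq_four_cases h4 with rfl | rfl | rfl | rfl | rfl <;>
  simp only [schurFun, Nat.card_eq_fintype_card] at hb hs <;> cases b <;> revert s hb <;> decide

theorem schurFun_four_hook_support {μ : YoungDiagram} (h4 : μ.card = 4) {b : Bool}
    {s : Fin 3 → Bool} (ha : 0 < schurFun 4 μ ![!b, b, b]) (hc : 0 < schurFun 4 μ ![b, !b, b])
    (hs : 0 < schurFun 4 μ s) : s = ![!b, b, b] ∨ s = ![b, !b, b] ∨ s = ![b, b, !b] := by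
  rcases YoungDiagram.card_eq_four_cases h4 with rfl | rfl | rfl | rfl | rfl <;>
  cases b <;>
  simp only [schurFun, Nat.card_eq_fintype_card, Bool.not_true, Bool.not_false] at ha hc hs ⊢ <;>
  revert s ha hc <;> decide

theorem schurFun_five_41 : schurFun 5 (YoungDiagram.ofRowLens [4, 1] (by decide)) =
    fun s => Nat.card {k : Fin 4 // Function.update (fun _ => true) k false = s} := by
  funext s; simp only [schurFun, Nat.card_eq_fintype_card]; revert s; decide

theorem schurFun_five_2111 : schurFun 5 (YoungDiagram.ofRowLens [2, 1, 1, 1] (by decide)) =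
    fun s => Nat.card {k : Fin 4 // Function.update (fun _ => false) k true = s} := by
  funext s; simp only [schurFun, Nat.card_eq_fintype_card]; revert s; decide

namespace SCG

variable {n N : ℕ} {G : SCG n N}

theorem mem_Comp_self (S : Set ℕ) (v : G.V) : v ∈ G.Comp S v :=
  Relation.ReflTransGen.refl

theorem mem_Comp_of_edge {S : Set ℕ} {v a c : G.V} {i : ℕ} (ha : a ∈ G.Comp S v) (hi : i ∈ S)
    (hE : G.E i a c) : c ∈ G.Comp S v :=
  ha.tail ⟨i, hi, hE⟩

theorem Connected.mem_of_closed (hconn : G.Connected) {S : Set G.V} {u : G.V} (hu : u ∈ S)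
    (hS : ∀ i a c, a ∈ S → G.E i a c → c ∈ S) (v : G.V) : v ∈ S := by
  induction hconn u v with
  | refl => exact hu
  | tail _ hstep ih =>
    obtain ⟨i, -, hE⟩ := hstep
    exact hS i _ _ ih hE

theorem sgn_eq_of_not_hasNbr (h1 : G.Ax1) {i : ℕ} (hi : 1 < i) (hin : i < n) {v : G.V}
    (hv : ¬G.hasNbr i v) : G.sgn v (i - 1) = G.sgn v i := by
  by_contra hne
  exact hv ((h1 i hi hin v).mp hne).exists

theorem eq_of_edge_of_sgn_ne (h1 : G.Ax1) {i : ℕ} (hi : 1 < i) (hin : i < n) {v a c : G.V}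
    (hv : G.sgn v (i - 1) ≠ G.sgn v i) (ha : G.E i v a) (hc : G.E i v c) : c = a :=
  ((h1 i hi hin v).mp hv).unique hc ha

theorem sgn_succ_of_edge (h3 : G.Ax3) {i : ℕ} {v w : G.V} (hE : G.E i v w)
    (hv : G.sgn v (i + 1) = G.sgn v i) : G.sgn w (i + 1) = G.sgn v (i + 1) := by
  by_contra hne
  exact (h3 i v w hE).2 (Ne.symm hne) hv

theorem fullGF_eq_of_surjective {ι : Type*} (f : ι → G.V) (hf : Function.Surjective f)
    (σ : ι → Fin (N - 1) → Bool) (hσ : Function.Injective σ)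
    (hsig : ∀ k (j : Fin (N - 1)), G.sgn (f k) (j + 1) = σ k j) :
    G.fullGF = (fun s => Nat.card {k // σ k = s}) ∧ Nat.card G.V = Nat.card ι := by
  have hinj : Function.Injective f := fun k l h => hσ (funext fun j => by rw [← hsig, h, hsig])
  let e := Equiv.ofBijective f ⟨hinj, hf⟩
  refine ⟨funext fun s => Nat.card_congr (e.subtypeEquiv fun k => ?_).symm,
    (Nat.card_congr e).symm⟩
  change σ k = s ↔ ∀ j : Fin (N - 1), G.sgn (f k) (j + 1) = s j
  simp only [funext_iff, hsig]

/-- The part of the signature of `v` that `restGF` reads in degree `4` from position `lo`. -/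
def window (G : SCG n N) (lo : ℕ) (v : G.V) : Fin 3 → Bool :=
  ![G.sgn v lo, G.sgn v (lo + 1), G.sgn v (lo + 2)]

theorem LSF.exists_window_pos (hLSF : G.LSF 4) {lo : ℕ} (hlo : 0 < lo) (hn : lo + 2 < n)
    (v : G.V) : ∃ μ : YoungDiagram, μ.card = 4 ∧
      ∀ w ∈ G.Comp (Set.Icc (lo + 1) (lo + 2)) v, 0 < schurFun 4 μ (G.window lo w) := by
  obtain ⟨μ, hμ, hgf⟩ := hLSF (lo + 2) (by omega) hn v
  refine ⟨μ, hμ, fun w hw => ?_⟩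
  have := G.fintypeV
  have hwin : ∀ j : Fin (4 - 1), G.sgn w (lo + j.1) = G.window lo w j := by
    intro j; fin_cases j <;> rfl
  rw [← congrFun hgf, show lo + 2 - (4 - 3) = lo + 1 by omega, show lo + 2 - (4 - 2) = lo by omega]
  have : Nonempty {x : G.V // x ∈ G.Comp (Set.Icc (lo + 1) (lo + 2)) v ∧
      ∀ j : Fin (4 - 1), G.sgn x (lo + j.1) = G.window lo w j} := ⟨w, hw, hwin⟩
  exact Nat.card_pos

theorem window_eq_of_mem_const (hLSF : G.LSF 4) {lo : ℕ} (hlo : 0 < lo) (hn : lo + 2 < n)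
    {v w : G.V} {b : Bool} (hv : G.window lo v = ![b, b, b])
    (hw : w ∈ G.Comp (Set.Icc (lo + 1) (lo + 2)) v) : G.window lo w = ![b, b, b] := by
  obtain ⟨μ, hμ, hpos⟩ := hLSF.exists_window_pos hlo hn v
  exact schurFun_four_const_support hμ (hv ▸ hpos v (mem_Comp_self _ v)) (hpos w hw)

theorem not_hasNbr_of_window_eq_const (h2 : G.Ax2) (hLSF : G.LSF 4) {lo : ℕ} (hlo : 0 < lo)
    (hn : lo + 2 < n) {v : G.V} {b : Bool} (hv : G.window lo v = ![b, b, b]) {i : ℕ}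
    (hi : i = lo + 1 ∨ i = lo + 2) : ¬G.hasNbr i v := by
  rintro ⟨w, hE⟩
  have hw := window_eq_of_mem_const hLSF hlo hn hv
    (mem_Comp_of_edge (mem_Comp_self _ v) (by rcases hi with rfl | rfl <;> simp) hE)
  have hconst : ∀ z, G.window lo z = ![b, b, b] → G.sgn z i = b := by
    rintro z hz
    rcases hi with rfl | rfl
    · exact congrFun hz 1
    · exact congrFun hz 2
  have hflip : G.sgn w i = !G.sgn v i := (h2 i v w hE).2.1
  simp [hconst w hw, hconst v hv] at hflip

def WindowsAlmostConst (G : SCG n N) (lo : ℕ) (b : Bool) (v : G.V) : Prop :=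
  ∀ w ∈ G.Comp (Set.Icc (lo + 1) (lo + 2)) v, ∀ p q : Fin 3, p ≠ q →
    G.window lo w p = b ∨ G.window lo w q = b

theorem windowsAlmostConst_of_hook (hLSF : G.LSF 4) {lo : ℕ} (hlo : 0 < lo) (hn : lo + 2 < n)
    {v c : G.V} {b : Bool} (hv : G.window lo v = ![!b, b, b])
    (hc : c ∈ G.Comp (Set.Icc (lo + 1) (lo + 2)) v) (hc' : G.window lo c = ![b, !b, b]) :
    G.WindowsAlmostConst lo b v := by
  obtain ⟨μ, hμ, hpos⟩ := hLSF.exists_window_pos hlo hn v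
  intro w hw
  rcases schurFun_four_hook_support hμ (hv ▸ hpos v (mem_Comp_self _ v)) (hc' ▸ hpos c hc)
    (hpos w hw) with h | h | h <;> rw [h] <;> cases b <;> decide

theorem sgn_of_two_edge_of_not_hasNbr (h1 : G.Ax1) (h2 : G.Ax2) (h3 : G.Ax3) (hLSF : G.LSF 4)
    (hn : 4 < n) {u w : G.V} (huw : G.E 2 u w) (hu3 : ¬G.hasNbr 3 u) (hu4 : ¬G.hasNbr 4 u) :
    ∃ b, (G.sgn u 1 = !b ∧ G.sgn u 2 = b ∧ G.sgn u 3 = b ∧ G.sgn u 4 = b) ∧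
      (G.sgn w 1 = b ∧ G.sgn w 2 = !b ∧ G.sgn w 3 = b ∧ G.sgn w 4 = b) := by
  have hu3' : G.sgn u 3 = G.sgn u 2 := (sgn_eq_of_not_hasNbr h1 (by norm_num) (by omega) hu3).symm
  have hu4' : G.sgn u 4 = G.sgn u 2 :=
    (sgn_eq_of_not_hasNbr h1 (i := 4) (by norm_num) (by omega) hu4).symm.trans hu3'
  obtain ⟨hw1, hw2, hfar⟩ := h2 2 u w huw
  have hw3 : G.sgn w 3 = G.sgn u 3 := sgn_succ_of_edge h3 huw hu3'
  have hw4 : G.sgn w 4 = G.sgn u 4 := hfar 4 (by norm_num)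
  have hu1 : G.sgn u 1 = !G.sgn u 2 := by
    by_contra h
    have hconst : G.window 1 u = ![G.sgn u 2, G.sgn u 2, G.sgn u 2] := by
      simp_all [window]
    exact not_hasNbr_of_window_eq_const h2 hLSF one_pos (by omega) hconst (Or.inl rfl) ⟨w, huw⟩
  refine ⟨G.sgn u 2, ⟨hu1, rfl, hu3', hu4'⟩, ?_, hw2, hw3.trans hu3', hw4.trans hu4'⟩
  simpa [hu1] using hw1

theorem exists_three_edge (h1 : G.Ax1) (h2 : G.Ax2) (h3 : G.Ax3) (hLSF : G.LSF 4) (hn : 4 < n)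
    {u w : G.V} {b : Bool} (huw : G.E 2 u w) (hu1 : G.sgn u 1 = !b) (hu2 : G.sgn u 2 = b)
    (hu3 : G.sgn u 3 = b) (hw1 : G.sgn w 1 = b) (hw2 : G.sgn w 2 = !b) (hw3 : G.sgn w 3 = b)
    (hw4 : G.sgn w 4 = b) :
    ∃ x, G.E 3 w x ∧ (G.sgn x 1 = b ∧ G.sgn x 2 = b ∧ G.sgn x 3 = !b ∧ G.sgn x 4 = b) ∧
      ¬G.hasNbr 2 x := by
  have hw : w ∈ G.Comp (Set.Icc 2 3) u := mem_Comp_of_edge (mem_Comp_self _ u) (by simp) huw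
  have hC : G.WindowsAlmostConst 1 b u :=
    windowsAlmostConst_of_hook hLSF one_pos (by omega) (by simp [window, *]) hw
      (by simp [window, *])
  obtain ⟨x, hwx⟩ : G.hasNbr 3 w :=
    ((h1 3 (by norm_num) (by omega) w).mp (by simp [hw2, hw3])).exists
  obtain ⟨hx2, hx3, -⟩ := h2 3 w x hwx
  have hx2 : G.sgn x 2 = b := by simpa [hw2] using hx2
  have hx3 : G.sgn x 3 = !b := by simpa [hw3] using hx3
  have hx4 : G.sgn x 4 = b := (sgn_succ_of_edge h3 hwx (by rw [hw4, hw3])).trans hw4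
  have hx : x ∈ G.Comp (Set.Icc 2 3) u := mem_Comp_of_edge hw (by simp) hwx
  have hx1 : G.sgn x 1 = b := by
    simpa [window, hx3] using hC x hx 0 2 (by decide)
  refine ⟨x, hwx, ⟨hx1, hx2, hx3, hx4⟩, ?_⟩
  rintro ⟨p, hxp⟩
  obtain ⟨hp1, hp2, -⟩ := h2 2 x p hxp
  simpa [window, hp1, hp2, hx1, hx2] using
    hC p (mem_Comp_of_edge hx (by simp) hxp) 0 1 (by decide)

theorem exists_four_edge (h1 : G.Ax1) (h2 : G.Ax2) (hLSF : G.LSF 4) (hn : 4 < n) {w x : G.V}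
    {b : Bool} (hwx : G.E 3 w x) (hw2 : G.sgn w 2 = !b) (hw3 : G.sgn w 3 = b)
    (hw4 : G.sgn w 4 = b) (hx1 : G.sgn x 1 = b) (hx2 : G.sgn x 2 = b) (hx3 : G.sgn x 3 = !b)
    (hx4 : G.sgn x 4 = b) :
    ∃ y, G.E 4 x y ∧ (G.sgn y 1 = b ∧ G.sgn y 2 = b ∧ G.sgn y 3 = b ∧ G.sgn y 4 = !b) ∧
      ¬G.hasNbr 4 w ∧ ¬G.hasNbr 3 y ∧ ¬G.hasNbr 2 y := by
  have hx : x ∈ G.Comp (Set.Icc 3 4) w := mem_Comp_of_edge (mem_Comp_self _ w) (by simp) hwx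
  have hC : G.WindowsAlmostConst 2 b w :=
    windowsAlmostConst_of_hook hLSF two_pos (by omega) (by simp [window, *]) hx
      (by simp [window, *])
  obtain ⟨y, hxy⟩ : G.hasNbr 4 x :=
    ((h1 4 (by norm_num) hn x).mp (by simp [hx3, hx4])).exists
  obtain ⟨hy3, hy4, hfar⟩ := h2 4 x y hxy
  have hy3 : G.sgn y 3 = b := by simpa [hx3] using hy3
  have hy4 : G.sgn y 4 = !b := by simpa [hx4] using hy4
  have hy1 : G.sgn y 1 = b := (hfar 1 (by norm_num)).trans hx1
  have hy : y ∈ G.Comp (Set.Icc 3 4) w := mem_Comp_of_edge hx (by simp) hxy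
  have hy2 : G.sgn y 2 = b := by
    simpa [window, hy4] using hC y hy 0 2 (by decide)
  refine ⟨y, hxy, ⟨hy1, hy2, hy3, hy4⟩, ?_, ?_,
    not_hasNbr_of_window_eq_const h2 hLSF one_pos (by omega) (b := b)
      (by simp [window, hy1, hy2, hy3]) (Or.inl rfl)⟩
  · rintro ⟨z, hwz⟩
    obtain ⟨hz3, hz4, -⟩ := h2 4 w z hwz
    simpa [window, hz3, hz4, hw3, hw4] using
      hC z (mem_Comp_of_edge (mem_Comp_self _ w) (by simp) hwz) 1 2 (by decide)
  · rintro ⟨q, hyq⟩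
    obtain ⟨hq2, hq3, -⟩ := h2 3 y q hyq
    simpa [window, hq2, hq3, hy2, hy3] using
      hC q (mem_Comp_of_edge hy (by simp) hyq) 0 1 (by decide)

theorem exists_path_of_two_edge {G : SCG 5 N} (hP : G.Proper) (h1 : G.Ax1) (h2 : G.Ax2)
    (h3 : G.Ax3) (hLSF : G.LSF 4) {u : G.V} (hu2 : G.hasNbr 2 u) (hu3 : ¬G.hasNbr 3 u)
    (hu4 : ¬G.hasNbr 4 u) :
    ∃ (b : Bool) (f : Fin 4 → G.V), f 0 = u ∧
      (∀ k (j : Fin 4), G.sgn (f k) (j + 1) = Function.update (fun _ => b) k (!b) j) ∧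
      ∀ i a c, a ∈ Set.range f → G.E i a c → c ∈ Set.range f := by
  obtain ⟨w, huw⟩ := hu2
  obtain ⟨b, ⟨su1, su2, su3, su4⟩, sw1, sw2, sw3, sw4⟩ :=
    sgn_of_two_edge_of_not_hasNbr h1 h2 h3 hLSF (by norm_num) huw hu3 hu4
  obtain ⟨x, hwx, ⟨sx1, sx2, sx3, sx4⟩, hx2⟩ :=
    exists_three_edge h1 h2 h3 hLSF (by norm_num) huw su1 su2 su3 sw1 sw2 sw3 sw4
  obtain ⟨y, hxy, ⟨sy1, sy2, sy3, sy4⟩, hw4, hy3, hy2⟩ :=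
    exists_four_edge h1 h2 hLSF (by norm_num) hwx sw2 sw3 sw4 sx1 sx2 sx3 sx4
  refine ⟨b, ![u, w, x, y], rfl, fun k j => ?_, ?_⟩
  · fin_cases k <;> fin_cases j <;> simp [*]
  rintro i _ c ⟨k, rfl⟩ hE
  obtain ⟨-, -, hi, hin⟩ := hP i _ c hE
  have uniq : ∀ {a a' : G.V}, G.sgn a (i - 1) ≠ G.sgn a i → G.E i a a' → G.E i a c → c = a' :=
    fun hne ha hc => eq_of_edge_of_sgn_ne h1 hi hin hne ha hc
  interval_cases i <;> fin_cases k
  · exact ⟨1, (uniq (by simp [*]) huw hE).symm⟩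
  · exact ⟨0, (uniq (by simp [*]) (hP 2 u w huw).1 hE).symm⟩
  · exact absurd ⟨c, hE⟩ hx2
  · exact absurd ⟨c, hE⟩ hy2
  · exact absurd ⟨c, hE⟩ hu3
  · exact ⟨2, (uniq (by simp [*]) hwx hE).symm⟩
  · exact ⟨1, (uniq (by simp [*]) (hP 3 w x hwx).1 hE).symm⟩
  · exact absurd ⟨c, hE⟩ hy3
  · exact absurd ⟨c, hE⟩ hu4
  · exact absurd ⟨c, hE⟩ hw4
  · exact ⟨3, (uniq (by simp [*]) hxy hE).symm⟩
  · exact ⟨2, (uniq (by simp [*]) (hP 4 x y hxy).1 hE).symm⟩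

end SCG

/-- A connected degree-5 locally Schur positive graph with `LSF₄` containing a vertex
with a 2-edge but no 3- or 4-edge has generating function `s_{(4,1)}` or
`s_{(2,1,1,1)}`; in particular it has exactly 4 vertices. -/
theorem statement12 (G : SCG 5 5) (hP : G.Proper) (hconn : G.Connected)
    (h1 : G.Ax1) (h2 : G.Ax2) (h3 : G.Ax3)
    (hLSF : G.LSF 4)
    (u : G.V) (hu2 : G.hasNbr 2 u) (hu3 : ¬G.hasNbr 3 u) (hu4 : ¬G.hasNbr 4 u) :
    (G.fullGF = schurFun 5 (YoungDiagram.ofRowLens [4, 1] (by decide)) ∨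
     G.fullGF = schurFun 5 (YoungDiagram.ofRowLens [2, 1, 1, 1] (by decide))) ∧
    Nat.card G.V = 4 := by
  obtain ⟨b, f, rfl, hsig, hclosed⟩ := SCG.exists_path_of_two_edge hP h1 h2 h3 hLSF hu2 hu3 hu4
  have hsurj : Function.Surjective f := hconn.mem_of_closed ⟨0, rfl⟩ hclosed
  have hσ : Function.Injective fun k : Fin 4 => Function.update (fun _ => b) k (!b) := by
    cases b <;> decide
  obtain ⟨hGF, hcard⟩ := SCG.fullGF_eq_of_surjective f hsurj _ hσ hsig
  refine ⟨?_, by simpa using hcard⟩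
  cases b
  · exact Or.inr (hGF.trans schurFun_five_2111.symm)
  · exact Or.inl (hGF.trans schurFun_five_41.symm)
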